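/- Let 𝒳 be a finite set of cardinality k > 1, d > 1 finite, and let X₁,…,X_n be i.i.d. random vectors with distribution P on 𝒳^d. Let P̂_n := (1/n)Σ_{i=1}^{n} δ_{X_i} and λ̂_n := λ_ℰ(P̂_n). Then E(λ̂_n) ≤ λ_ℰ(P) for every n ≥ 1, i.e., λ̂_n is a negatively biased estimator of λ_ℰ(P). -/

import Mathlib

open scoped BigOperators Classical

/-- A function `P : Ω → ℝ` on a finite sample space is a probability measure if it is
nonnegative and sums to one. -/
def IsProb {Ω : Type*} [Fintype Ω] (P : Ω → ℝ) : Prop :=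
  (∀ ω, 0 ≤ P ω) ∧ ∑ ω, P ω = 1

/-- A probability measure on `𝒳^ι` is exchangeable if it is invariant under all
coordinate permutations. -/
def Exchangeable {ι 𝒳 : Type*} (Q : (ι → 𝒳) → ℝ) : Prop :=
  ∀ σ : Equiv.Perm ι, ∀ x : ι → 𝒳, Q (x ∘ σ) = Q x

/-- The exchangeable weight `λ_ℰ(P)`: the supremum of `λ` such that `P ≥ λ·Q` pointwise
for some exchangeable probability measure `Q`. -/
noncomputable def exchWeight {ι 𝒳 : Type*} [Fintype ι] [Fintype 𝒳]
    (P : (ι → 𝒳) → ℝ) : ℝ :=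
  sSup {l : ℝ | ∃ Q : (ι → 𝒳) → ℝ, IsProb Q ∧ Exchangeable Q ∧ ∀ x, l * Q x ≤ P x}

/-- The permutation-equivalence class `[x]` of `x`, as a set. -/
def permSet {ι 𝒳 : Type*} (x : ι → 𝒳) : Set (ι → 𝒳) :=
  {y | ∃ σ : Equiv.Perm ι, y = x ∘ σ}

/-- The permutation-equivalence class `[x]` of `x`, as a finset. -/
noncomputable def permClass {ι 𝒳 : Type*} [Fintype ι] (x : ι → 𝒳) :
    Finset (ι → 𝒳) :=
  Finset.univ.image (fun σ : Equiv.Perm ι => x ∘ σ)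


open MeasureTheory ProbabilityTheory Filter

/-- The empirical measure `P̂_n = (1/n) Σ_{i<n} δ_{X_i}` of the first `n` observations,
evaluated at a sample point `ω`. -/
noncomputable def empirical {𝒳 : Type*} {d : ℕ} {Ω₀ : Type*}
    (X : ℕ → Ω₀ → (Fin d → 𝒳)) (n : ℕ) (ω : Ω₀) : (Fin d → 𝒳) → ℝ :=
  fun a => (((Finset.range n).filter (fun i => X i ω = a)).card : ℝ) / n

section auxExch

variable {ι 𝒳 : Type*} [Fintype ι] [Fintype 𝒳]

lemma permClass_nonempty (x : ι → 𝒳) : (permClass x).Nonempty :=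
  ⟨x, Finset.mem_image.2 ⟨1, Finset.mem_univ _, by ext i; rfl⟩⟩

lemma mem_permClass_self (x : ι → 𝒳) : x ∈ permClass x :=
  Finset.mem_image.2 ⟨1, Finset.mem_univ _, by ext i; rfl⟩

lemma permClass_comp (x : ι → 𝒳) (σ : Equiv.Perm ι) : permClass (x ∘ σ) = permClass x := by
  ext y
  simp only [permClass, Finset.mem_image, Finset.mem_univ, true_and]
  constructor
  · rintro ⟨τ, rfl⟩; exact ⟨σ * τ, by ext i; rfl⟩
  · rintro ⟨ρ, rfl⟩; exact ⟨σ⁻¹ * ρ, by ext i; simp⟩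

/-- The minimum of `R` over the permutation class of `x`. -/
noncomputable def Mcl (R : (ι → 𝒳) → ℝ) (x : ι → 𝒳) : ℝ :=
  (permClass x).inf' (permClass_nonempty x) R

lemma Mcl_nonneg (R : (ι → 𝒳) → ℝ) (hR : ∀ x, 0 ≤ R x) (x : ι → 𝒳) : 0 ≤ Mcl R x :=
  Finset.le_inf' _ _ (fun y _ => hR y)

lemma mem_weight_set_bound {R : (ι → 𝒳) → ℝ} {l : ℝ}
    (hl : l ∈ {l : ℝ | ∃ Q : (ι → 𝒳) → ℝ, IsProb Q ∧ Exchangeable Q ∧ ∀ x, l * Q x ≤ R x}) :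
    l ≤ ∑ x, Mcl R x := by
  obtain ⟨Q, hQ, hex, hle⟩ := hl
  have h1 : ∀ x, l * Q x ≤ Mcl R x := by
    intro x
    refine Finset.le_inf' _ _ (fun y hy => ?_)
    obtain ⟨σ, -, rfl⟩ := Finset.mem_image.1 hy
    calc l * Q x = l * Q (x ∘ σ) := by rw [hex σ x]
    _ ≤ R (x ∘ σ) := hle _
  calc l = l * ∑ x, Q x := by rw [hQ.2, mul_one]
  _ = ∑ x, l * Q x := Finset.mul_sum _ _ _
  _ ≤ ∑ x, Mcl R x := Finset.sum_le_sum (fun x _ => h1 x)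

lemma weight_set_bddAbove (R : (ι → 𝒳) → ℝ) :
    BddAbove {l : ℝ | ∃ Q : (ι → 𝒳) → ℝ, IsProb Q ∧ Exchangeable Q ∧ ∀ x, l * Q x ≤ R x} :=
  ⟨∑ x, Mcl R x, fun _ hl => mem_weight_set_bound hl⟩

lemma zero_mem_weight_set [Nonempty (ι → 𝒳)] {R : (ι → 𝒳) → ℝ} (hR : ∀ x, 0 ≤ R x) :
    (0:ℝ) ∈ {l : ℝ | ∃ Q : (ι → 𝒳) → ℝ, IsProb Q ∧ Exchangeable Q ∧ ∀ x, l * Q x ≤ R x} := by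
  refine ⟨fun _ => (Fintype.card (ι → 𝒳) : ℝ)⁻¹, ⟨fun _ => by positivity, ?_⟩,
    fun _ _ => rfl, fun x => by simpa using hR x⟩
  rw [Finset.sum_const, nsmul_eq_mul]
  rw [Finset.card_univ, mul_inv_cancel₀]
  exact_mod_cast Fintype.card_ne_zero

lemma exchWeight_nonneg [Nonempty (ι → 𝒳)] {R : (ι → 𝒳) → ℝ} (hR : ∀ x, 0 ≤ R x) :
    0 ≤ exchWeight R :=
  le_csSup (weight_set_bddAbove R) (zero_mem_weight_set hR)

lemma exchWeight_le_sum [Nonempty (ι → 𝒳)] {R : (ι → 𝒳) → ℝ} (hR : ∀ x, 0 ≤ R x) :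
    exchWeight R ≤ ∑ x, Mcl R x :=
  csSup_le ⟨0, zero_mem_weight_set hR⟩ (fun _ hl => mem_weight_set_bound hl)

lemma sum_le_exchWeight [Nonempty (ι → 𝒳)] {R : (ι → 𝒳) → ℝ} (hR : IsProb R) :
    ∑ x, Mcl R x ≤ exchWeight R := by
  set lam := ∑ x, Mcl R x with hlam
  have hlam0 : 0 ≤ lam := Finset.sum_nonneg (fun x _ => Mcl_nonneg R hR.1 x)
  rcases hlam0.eq_or_lt with h | h
  · rw [← h]; exact exchWeight_nonneg hR.1
  · refine le_csSup (weight_set_bddAbove R) ?_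
    refine ⟨fun x => Mcl R x / lam, ⟨fun x => div_nonneg (Mcl_nonneg R hR.1 x) hlam0, ?_⟩,
      ?_, ?_⟩
    · rw [← Finset.sum_div, ← hlam, div_self h.ne']
    · intro σ x
      simp only [Mcl, permClass_comp]
    · intro x
      rw [mul_div_cancel₀ _ h.ne']
      exact Finset.inf'_le _ (mem_permClass_self x)

end auxExch

lemma sum_univ_congr {β : Type*} (F1 F2 : Fintype β) (f : β → ℝ) :
    @Finset.sum _ _ _ (@Finset.univ _ F1) f = @Finset.sum _ _ _ (@Finset.univ _ F2) f := by
  cases Subsingleton.elim F1 F2; rfl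

section auxInt

variable {𝒳 : Type*} [Fintype 𝒳] {d : ℕ} {Ω₀ : Type*} [MeasurableSpace Ω₀]
  (μ : Measure Ω₀) [IsProbabilityMeasure μ]

lemma integrable_inf' {α : Type*} (s : Finset α) (hs : s.Nonempty) (f : α → Ω₀ → ℝ)
    (hf : ∀ a ∈ s, Integrable (f a) μ) :
    Integrable (fun ω => s.inf' hs (fun a => f a ω)) μ := by
  induction hs using Finset.Nonempty.cons_induction with
  | singleton a =>
      have he : (fun ω => Finset.inf' {a} (Finset.singleton_nonempty a) (fun b => f b ω)) = f a := by
        funext ω; simp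
      rw [he]; exact hf a (by simp)
  | cons a s ha hne ih =>
      have he : (fun ω => (Finset.cons a s ha).inf' (Finset.cons_nonempty ha) (fun b => f b ω))
          = fun ω => f a ω ⊓ s.inf' hne (fun b => f b ω) := by
        funext ω; exact Finset.inf'_cons (H := hne) (f := fun b => f b ω) (hb := ha)
      rw [he]
      exact (hf a (by simp)).inf (ih (fun b hb => hf b (by simp [hb])))

lemma integrable_ind (X : ℕ → Ω₀ → (Fin d → 𝒳))
    (hmeas : ∀ i, @Measurable Ω₀ (Fin d → 𝒳) _ ⊤ (X i)) (i : ℕ) (y : Fin d → 𝒳) :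
    Integrable (fun ω => if X i ω = y then (1:ℝ) else 0) μ := by
  have hs : MeasurableSet {ω | X i ω = y} :=
    hmeas i (show @MeasurableSet (Fin d → 𝒳) ⊤ {y} from trivial)
  have : (fun ω => if X i ω = y then (1:ℝ) else 0)
      = Set.indicator {ω | X i ω = y} (fun _ => (1:ℝ)) := by
    ext ω; by_cases h : X i ω = y <;> simp [h, Set.indicator]
  rw [this]
  exact (integrable_const 1).indicator hs

lemma integral_ind (X : ℕ → Ω₀ → (Fin d → 𝒳))
    (hmeas : ∀ i, @Measurable Ω₀ (Fin d → 𝒳) _ ⊤ (X i)) (i : ℕ) (y : Fin d → 𝒳) :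
    ∫ ω, (if X i ω = y then (1:ℝ) else 0) ∂μ = (μ {ω | X i ω = y}).toReal := by
  have hs : MeasurableSet {ω | X i ω = y} :=
    hmeas i (show @MeasurableSet (Fin d → 𝒳) ⊤ {y} from trivial)
  have : (fun ω => if X i ω = y then (1:ℝ) else 0)
      = Set.indicator {ω | X i ω = y} (fun _ => (1:ℝ)) := by
    ext ω; by_cases h : X i ω = y <;> simp [h, Set.indicator]
  rw [this, integral_indicator_const (1:ℝ) hs, smul_eq_mul, mul_one, measureReal_def]

end auxInt

set_option maxHeartbeats 1000000 in
/-- Negative bias: `E(λ̂_n) ≤ λ_ℰ(P)` for every `n ≥ 1`. -/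
theorem stmt15 {𝒳 : Type*} [Fintype 𝒳] (hk : 1 < Fintype.card 𝒳)
    {d : ℕ} (hd : 1 < d)
    {Ω₀ : Type*} [MeasurableSpace Ω₀] (μ : Measure Ω₀) [IsProbabilityMeasure μ]
    (X : ℕ → Ω₀ → (Fin d → 𝒳))
    (hmeas : ∀ i, @Measurable Ω₀ (Fin d → 𝒳) _ ⊤ (X i))
    (hindep : ProbabilityTheory.iIndepFun (m := fun _ : ℕ => (⊤ : MeasurableSpace (Fin d → 𝒳))) X μ)
    (P : (Fin d → 𝒳) → ℝ) (hP : IsProb P)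
    (hdist : ∀ i : ℕ, ∀ a : Fin d → 𝒳, (μ {ω | X i ω = a}).toReal = P a)
    (n : ℕ) (hn : 1 ≤ n) :
    ∫ ω, exchWeight (empirical X n ω) ∂μ ≤ exchWeight P := by
  have hX : Nonempty 𝒳 := Fintype.card_pos_iff.mp (by omega)
  have hn0 : (n : ℝ) ≠ 0 := by positivity
  set e : (Fin d → 𝒳) → Ω₀ → ℝ := fun y ω => empirical X n ω y with he
  have heq : ∀ y, e y = fun ω => (∑ i ∈ Finset.range n, if X i ω = y then (1:ℝ) else 0) / n := by
    intro y; funext ω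
    simp only [he, empirical, Finset.card_filter]
    push_cast
    rfl
  have hint : ∀ y, Integrable (e y) μ := by
    intro y
    rw [heq]
    exact (integrable_finset_sum _ (fun i _ => integrable_ind μ X hmeas i y)).div_const n
  have hEe : ∀ y, ∫ ω, e y ω ∂μ = P y := by
    intro y
    rw [heq]
    rw [integral_div, integral_finset_sum _ (fun i _ => integrable_ind μ X hmeas i y)]
    have hc : ∀ i ∈ Finset.range n, ∫ ω, (if X i ω = y then (1:ℝ) else 0) ∂μ = P y := by
      intro i _
      rw [integral_ind μ X hmeas i y]
      exact hdist i y
    rw [Finset.sum_congr rfl hc, Finset.sum_const, Finset.card_range, nsmul_eq_mul,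
      mul_comm, mul_div_assoc, div_self hn0, mul_one]
  set m : (Fin d → 𝒳) → Ω₀ → ℝ :=
    fun x ω => (permClass x).inf' (permClass_nonempty x) (fun y => e y ω) with hm
  have hintm : ∀ x, Integrable (m x) μ :=
    fun x => integrable_inf' μ _ _ e (fun y _ => hint y)
  have hEm : ∀ x, ∫ ω, m x ω ∂μ ≤ Mcl P x := by
    intro x
    refine Finset.le_inf' _ _ (fun y hy => ?_)
    calc ∫ ω, m x ω ∂μ ≤ ∫ ω, e y ω ∂μ :=
      integral_mono (hintm x) (hint y) (fun ω => Finset.inf'_le _ hy)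
    _ = P y := hEe y
  have hg : Integrable (fun ω => ∑ x, m x ω) μ := integrable_finset_sum _ (fun x _ => hintm x)
  have hempnn : ∀ ω, ∀ a, 0 ≤ empirical X n ω a := by
    intro ω a
    exact div_nonneg (Nat.cast_nonneg _) (Nat.cast_nonneg _)
  have h1 : ∫ ω, exchWeight (empirical X n ω) ∂μ ≤ ∫ ω, ∑ x, m x ω ∂μ := by
    refine integral_mono_of_nonneg (Filter.Eventually.of_forall fun ω => ?_) hg
      (Filter.Eventually.of_forall fun ω => ?_)
    · exact exchWeight_nonneg (hempnn ω)
    · show exchWeight (empirical X n ω) ≤ ∑ x, m x ω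
      exact le_trans (exchWeight_le_sum (R := empirical X n ω) (hempnn ω))
        (le_of_eq (sum_univ_congr _ _ _))
  calc ∫ ω, exchWeight (empirical X n ω) ∂μ ≤ ∫ ω, ∑ x, m x ω ∂μ := h1
  _ = ∑ x, ∫ ω, m x ω ∂μ := integral_finset_sum _ (fun x _ => hintm x)
  _ ≤ ∑ x, Mcl P x := Finset.sum_le_sum (fun x _ => hEm x)
  _ ≤ exchWeight P :=
    le_trans (le_of_eq (sum_univ_congr _ _ _))
      (sum_le_exchWeight ⟨hP.1, (sum_univ_congr _ _ P).trans hP.2⟩)
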